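/- Let ℒ ⊂ ℝ^{n+1} be a lattice, y0 > 0, k ∈ ℒ*, and let V be the ℂ-linear span of {ω_{δk} : δ ∈ H_ℒ}. Suppose (u1,z1), (u2,z2) ∈ H_ℒ·k with z1 ≠ z2 and z1 ≠ −z2, and suppose z1·y0 ∉ ℤ \ {0} and z2·y0 ∉ ℤ \ {0} (which holds for all y0 outside the countable set (1/z1)ℤ ∪ (1/z2)ℤ when z1, z2 ≠ 0). Then the waves ω_{u1} and ω_{u2} (on ℝ^n) belong to Π_{y0}(V), the J̃-orbits J̃·u1 and J̃·u2 are disjoint, and the spans of {ω_p : p ∈ J̃·u1} and of {ω_p : p ∈ J̃·u2} are nonzero J̃-invariant subspaces of Π_{y0}(V) with trivial intersection; thus the projection of the single mode V is a mode interaction of at least two modes. -/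

import Mathlib

open MeasureTheory
open scoped Classical

noncomputable section

/-- The Euclidean dot product on `ℝⁿ`. -/
def dotn {n : ℕ} (a b : Fin n → ℝ) : ℝ := ∑ i, a i * b i

/-- `ℝ^{n+1}` viewed as `ℝⁿ × ℝ`, points written `(x, y)`. -/
abbrev V1 (n : ℕ) := (Fin n → ℝ) × ℝ

/-- The standard inner product on `ℝ^{n+1} = ℝⁿ × ℝ`. -/
def dot1 {n : ℕ} (k p : V1 n) : ℝ := dotn k.1 p.1 + k.2 * p.2

/-- `e^{2πit}`. -/
def expz (t : ℝ) : ℂ := Complex.exp (2 * (Real.pi : ℂ) * Complex.I * (t : ℂ))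

/-- The wave `ω_k` on `ℝ^{n+1}`. -/
def wave {n : ℕ} (k : V1 n) : V1 n → ℂ := fun p => expz (dot1 k p)

/-- The wave `ω_k̃` on `ℝⁿ`. -/
def waveN {n : ℕ} (k : Fin n → ℝ) : (Fin n → ℝ) → ℂ := fun x => expz (dotn k x)

/-- The projection operator `Π_{y0}`. -/
def Proj {n : ℕ} (y0 : ℝ) (f : V1 n → ℂ) : (Fin n → ℝ) → ℂ :=
  fun x => ∫ y in (0:ℝ)..y0, f (x, y)

/-- The lattice generated over `ℤ` by the vectors `b i`. -/
def latticeOf {n : ℕ} (b : Fin (n+1) → V1 n) : Set (V1 n) :=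
  {v | ∃ c : Fin (n+1) → ℤ, v = ∑ i, (c i : ℝ) • b i}

/-- The dual lattice `ℒ*` of a subset of `ℝ^{n+1}`. -/
def dualLat {n : ℕ} (L : Set (V1 n)) : Set (V1 n) :=
  {k | ∀ l ∈ L, ∃ m : ℤ, dot1 k l = (m : ℝ)}

/-- The dual lattice of a subset of `ℝⁿ`. -/
def dualN {n : ℕ} (Lt : Set (Fin n → ℝ)) : Set (Fin n → ℝ) :=
  {k | ∀ v ∈ Lt, ∃ m : ℤ, dotn k v = (m : ℝ)}

/-- `𝒳_ℒ`: the ℂ-linear span of the waves `ω_k`, `k ∈ ℒ*`. -/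
def XL {n : ℕ} (L : Set (V1 n)) : Submodule ℂ (V1 n → ℂ) :=
  Submodule.span ℂ (wave '' dualLat L)

/-- The ℂ-linear span of the waves `ω_k̃`, `k̃` in the dual of a planar lattice. -/
def XN {n : ℕ} (Lt : Set (Fin n → ℝ)) : Submodule ℂ ((Fin n → ℝ) → ℂ) :=
  Submodule.span ℂ (waveN '' dualN Lt)

/-- Membership in `O(n)`: a linear automorphism of `ℝⁿ` preserving the dot product. -/
def IsOrthoN {n : ℕ} (α : (Fin n → ℝ) ≃ₗ[ℝ] (Fin n → ℝ)) : Prop :=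
  ∀ a b, dotn (α a) (α b) = dotn a b

/-- Membership in `O(n+1)`: a linear automorphism of `ℝ^{n+1}` preserving the inner product. -/
def IsOrtho1 {n : ℕ} (δ : V1 n ≃ₗ[ℝ] V1 n) : Prop :=
  ∀ a b, dot1 (δ a) (δ b) = dot1 a b

/-- The holohedry `H_ℒ`: orthogonal transformations mapping `ℒ` to itself. -/
def HolL {n : ℕ} (L : Set (V1 n)) : Set (V1 n ≃ₗ[ℝ] V1 n) :=
  {γ | IsOrtho1 γ ∧ (⇑γ) '' L = L}

/-- `α₊`: acts as `α` on `ℝⁿ` and `+1` on the last coordinate. -/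
def aPlus {n : ℕ} (α : (Fin n → ℝ) ≃ₗ[ℝ] (Fin n → ℝ)) : V1 n ≃ₗ[ℝ] V1 n :=
  α.prodCongr (LinearEquiv.refl ℝ ℝ)

/-- `α₋`: acts as `α` on `ℝⁿ` and `−1` on the last coordinate. -/
def aMinus {n : ℕ} (α : (Fin n → ℝ) ≃ₗ[ℝ] (Fin n → ℝ)) : V1 n ≃ₗ[ℝ] V1 n :=
  α.prodCongr (LinearEquiv.neg ℝ)

/-- The group `J̃` of induced orthogonal symmetries. -/
def Jt {n : ℕ} (L : Set (V1 n)) (y0 : ℝ) : Set ((Fin n → ℝ) ≃ₗ[ℝ] (Fin n → ℝ)) :=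
  {α | IsOrthoN α ∧
    (aPlus α ∈ HolL L ∨ ((((0 : Fin n → ℝ), y0) : V1 n) ∈ L ∧ aMinus α ∈ HolL L))}

/-- The subset `J̃↑` of `H_ℒ`. -/
def Jup {n : ℕ} (L : Set (V1 n)) (y0 : ℝ) : Set (V1 n ≃ₗ[ℝ] V1 n) :=
  {γ | ∃ α ∈ Jt L y0,
    (γ = aPlus α ∧ aPlus α ∈ HolL L) ∨ (γ = aMinus α ∧ aMinus α ∈ HolL L)}

/-- The set `J^α_k = {δ ∈ H_ℒ : P(δk) = α k̃}`. -/
def Jset {n : ℕ} (L : Set (V1 n)) (k : V1 n) (α : (Fin n → ℝ) ≃ₗ[ℝ] (Fin n → ℝ)) :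
    Set (V1 n ≃ₗ[ℝ] V1 n) :=
  {δ ∈ HolL L | (δ k).1 = α k.1}

/-- The set `J^{Id}_k = {δ ∈ H_ℒ : P(δk) = k̃}`. -/
def JId {n : ℕ} (L : Set (V1 n)) (k : V1 n) : Set (V1 n ≃ₗ[ℝ] V1 n) :=
  {δ ∈ HolL L | (δ k).1 = k.1}

/-- The set `S_k = ⋃_{α ∈ J̃} J^α_k`. -/
def Sk {n : ℕ} (L : Set (V1 n)) (y0 : ℝ) (k : V1 n) : Set (V1 n ≃ₗ[ℝ] V1 n) :=
  ⋃ α ∈ Jt L y0, Jset L k α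

/-- The isotropy subgroup `Σ_k` of `k` in `H_ℒ`. -/
def Sigk {n : ℕ} (L : Set (V1 n)) (k : V1 n) : Set (V1 n ≃ₗ[ℝ] V1 n) :=
  {δ ∈ HolL L | δ k = k}

/-- The orbit `H_ℒ·k`. -/
def HOrb {n : ℕ} (L : Set (V1 n)) (k : V1 n) : Set (V1 n) :=
  (fun δ : V1 n ≃ₗ[ℝ] V1 n => δ k) '' HolL L

/-- The orbit `J̃·u`. -/
def JOrb {n : ℕ} (L : Set (V1 n)) (y0 : ℝ) (u : Fin n → ℝ) : Set (Fin n → ℝ) :=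
  (fun α : (Fin n → ℝ) ≃ₗ[ℝ] (Fin n → ℝ) => α u) '' Jt L y0

/-- The single mode `V`: the ℂ-span of the waves `ω_{δk}`, `δ ∈ H_ℒ`. -/
def modeV {n : ℕ} (L : Set (V1 n)) (k : V1 n) : Submodule ℂ (V1 n → ℂ) :=
  Submodule.span ℂ ((fun δ : V1 n ≃ₗ[ℝ] V1 n => wave (δ k)) '' HolL L)

/-- The projected lattice `𝓛̃`. -/
def projLat {n : ℕ} (L : Set (V1 n)) (y0 : ℝ) : Set (Fin n → ℝ) :=
  if (((0 : Fin n → ℝ), y0) : V1 n) ∈ L then Prod.fst '' L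
  else Prod.fst '' (L ∩ {p : V1 n | p.2 = 0})

/-! `Π_{y0}` sends the wave `ω_{(u,z)}` to `c(z) ω_u` with `c(z) = ∫₀^{y0} e^{2πizy} dy`, and
`c(z) ≠ 0` exactly when `z y0 ∉ ℤ ∖ {0}`. Every `α ∈ J̃` lifts to `α₊` or `α₋ ∈ H_ℒ`, so it maps
`(u, z) ∈ H_ℒ·k` to `(αu, ±z) ∈ H_ℒ·k`; hence every wave `ω_w`, `w ∈ J̃·u`, is the projection of
a multiple of a wave of `V`. On `H_ℒ·k` the norm is `|k|`, so `|w|² + z² = |k|²` on `J̃·u`, and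
the orbits are disjoint as soon as `z1² ≠ z2²`. Distinct waves are distinct characters of
`ℝⁿ`, hence linearly independent, so spans over disjoint sets of frequencies meet trivially. -/

open Matrix

lemma dotn_eq_dotProduct {n : ℕ} (a b : Fin n → ℝ) : dotn a b = a ⬝ᵥ b := rfl

lemma expz_add (a b : ℝ) : expz (a + b) = expz a * expz b := by
  simp only [expz, Complex.ofReal_add, mul_add, Complex.exp_add]

lemma expz_zero : expz 0 = 1 := by simp [expz]

lemma expz_ne_zero (t : ℝ) : expz t ≠ 0 := Complex.exp_ne_zero _

lemma expz_one_half : expz (1 / 2) = -1 := by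
  rw [expz, ← Complex.exp_pi_mul_I]; congr 1; push_cast; ring

lemma expz_eq_one_iff (t : ℝ) : expz t = 1 ↔ ∃ m : ℤ, t = m := by
  rw [expz, Complex.exp_eq_one_iff]
  refine exists_congr fun m => ⟨fun h => ?_, fun h => by rw [h]; push_cast; ring⟩
  have h2πi : 2 * (Real.pi : ℂ) * Complex.I ≠ 0 := by simp [Real.pi_ne_zero]
  exact_mod_cast mul_left_cancel₀ h2πi (h.trans (mul_comm _ _))

lemma continuous_expz : Continuous expz := by unfold expz; fun_prop

section Waves

variable {n : ℕ}

def waveChar (u : Fin n → ℝ) : AddChar (Fin n → ℝ) ℂ where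
  toFun := waveN u
  map_zero_eq_one' := by simp [waveN, dotn_eq_dotProduct, expz_zero]
  map_add_eq_mul' x y := by simp only [waveN, dotn_eq_dotProduct, dotProduct_add, expz_add]

lemma waveN_ne_zero (u : Fin n → ℝ) : waveN u ≠ 0 :=
  fun h => expz_ne_zero (dotn u 0) (congrFun h 0)

/-- At `x = w / (2|w|²)`, `w = u - v`, the two waves differ by the factor `expz (1/2) = -1`. -/
lemma waveN_injective : Function.Injective (waveN (n := n)) := by
  intro u v huv
  by_contra hne
  set w := u - v
  have hw : w ⬝ᵥ w ≠ 0 := fun h => hne (sub_eq_zero.mp (dotProduct_self_eq_zero.mp h))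
  set x := (2 * (w ⬝ᵥ w))⁻¹ • w
  have hux : dotn u x = dotn v x + 1 / 2 := by
    have : w ⬝ᵥ x = 1 / 2 := by
      simp only [x, dotProduct_smul, smul_eq_mul]; field_simp
    simp only [dotn_eq_dotProduct, ← this, w, sub_dotProduct]; ring
  have h : -expz (dotn v x) = expz (dotn v x) := by
    simpa only [waveN, hux, expz_add, expz_one_half, mul_neg_one] using congrFun huv x
  exact expz_ne_zero _ (by linear_combination (-1 / 2 : ℂ) * h)

lemma linearIndependent_waveN : LinearIndependent ℂ (waveN (n := n)) :=
  (linearIndependent_monoidHom (Multiplicative (Fin n → ℝ)) ℂ).comp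
    (fun u => (waveChar u).toMonoidHom) fun _ _ h =>
      waveN_injective (funext fun x => DFunLike.congr_fun h (Multiplicative.ofAdd x))

lemma span_waveN_inf_eq_bot {S T : Set (Fin n → ℝ)} (h : Disjoint S T) :
    Submodule.span ℂ (waveN '' S) ⊓ Submodule.span ℂ (waveN '' T) = ⊥ :=
  disjoint_iff.mp (linearIndependent_waveN.disjoint_span_image h)

lemma waveN_comp_symm {α : (Fin n → ℝ) ≃ₗ[ℝ] (Fin n → ℝ)} (hα : IsOrthoN α)
    (v : Fin n → ℝ) : (fun x => waveN v (α.symm x)) = waveN (α v) := by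
  funext x
  rw [waveN, waveN, ← hα v (α.symm x), α.apply_symm_apply]

lemma continuous_wave (v : V1 n) : Continuous (wave v) := by
  unfold wave dot1 dotn; exact continuous_expz.comp (by fun_prop)

end Waves

lemma integral_expz_mul_ne_zero {y0 z : ℝ} (hy0 : 0 < y0)
    (hi : ∀ m : ℤ, z * y0 = (m : ℝ) → m = 0) : (∫ y in (0 : ℝ)..y0, expz (z * y)) ≠ 0 := by
  rcases eq_or_ne z 0 with rfl | hz
  · simp [expz_zero, hy0.ne']
  set c : ℂ := 2 * Real.pi * Complex.I * z
  have hc : c ≠ 0 := by simp [c, Real.pi_ne_zero, hz]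
  have hexp : ∀ y : ℝ, expz (z * y) = Complex.exp (c * y) := fun y => by
    simp only [expz, c]; push_cast; ring_nf
  simp only [hexp, integral_exp_mul_complex hc, Complex.ofReal_zero, mul_zero, Complex.exp_zero]
  refine div_ne_zero (sub_ne_zero.mpr fun h1 => ?_) hc
  obtain ⟨m, hm⟩ := (expz_eq_one_iff (z * y0)).mp ((hexp y0).trans h1)
  exact mul_ne_zero hz hy0.ne' (hm.trans (by rw [hi m hm, Int.cast_zero]))

section Projection

variable {n : ℕ}

lemma Proj_wave (y0 : ℝ) (u : Fin n → ℝ) (z : ℝ) :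
    Proj y0 (wave ((u, z) : V1 n)) = (∫ y in (0 : ℝ)..y0, expz (z * y)) • waveN u := by
  funext x
  simp only [Proj, wave, dot1, expz_add, intervalIntegral.integral_const_mul, Pi.smul_apply,
    smul_eq_mul, waveN, mul_comm]

-- `Proj` is additive only where the slices are integrable (elsewhere the integral is junk).
def projSubmodule (y0 : ℝ) (V : Submodule ℂ (V1 n → ℂ)) : Submodule ℂ ((Fin n → ℝ) → ℂ) where
  carrier := {g | ∃ f ∈ V, (∀ x, IntervalIntegrable (fun y => f (x, y)) volume 0 y0) ∧
    Proj y0 f = g}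
  zero_mem' := ⟨0, V.zero_mem, fun _ => intervalIntegrable_const, by ext; simp [Proj]⟩
  add_mem' := by
    rintro _ _ ⟨f, hf, hfi, rfl⟩ ⟨g, hg, hgi, rfl⟩
    refine ⟨f + g, V.add_mem hf hg, fun x => (hfi x).add (hgi x), funext fun x => ?_⟩
    exact intervalIntegral.integral_add (hfi x) (hgi x)
  smul_mem' := by
    rintro c _ ⟨f, hf, hfi, rfl⟩
    refine ⟨c • f, V.smul_mem c hf, fun x => (hfi x).smul c, funext fun x => ?_⟩
    exact intervalIntegral.integral_smul c _

lemma coe_projSubmodule_subset (y0 : ℝ) (V : Submodule ℂ (V1 n → ℂ)) :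
    (projSubmodule y0 V : Set ((Fin n → ℝ) → ℂ)) ⊆ Proj y0 '' (V : Set (V1 n → ℂ)) :=
  fun _ ⟨f, hf, _, hfg⟩ => ⟨f, hf, hfg⟩

lemma waveN_mem_projSubmodule {y0 : ℝ} {V : Submodule ℂ (V1 n → ℂ)} {u : Fin n → ℝ} {z : ℝ}
    (hV : wave ((u, z) : V1 n) ∈ V) (hc : (∫ y in (0 : ℝ)..y0, expz (z * y)) ≠ 0) :
    waveN u ∈ projSubmodule y0 V := by
  set c := ∫ y in (0 : ℝ)..y0, expz (z * y)
  have hproj : c • waveN u ∈ projSubmodule y0 V :=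
    ⟨_, hV, fun x => ((continuous_wave _).comp (.prodMk_right x)).intervalIntegrable _ _,
      Proj_wave y0 u z⟩
  simpa [smul_smul, inv_mul_cancel₀ hc] using (projSubmodule y0 V).smul_mem c⁻¹ hproj

end Projection

section Orbits

variable {n : ℕ} {L : Set (V1 n)} {y0 : ℝ} {k : V1 n} {u : Fin n → ℝ} {z : ℝ}

lemma mem_HolL_of_coe_eq_comp {γ γ₁ γ₂ : V1 n ≃ₗ[ℝ] V1 n} (h₁ : γ₁ ∈ HolL L) (h₂ : γ₂ ∈ HolL L)
    (h : ⇑γ = γ₁ ∘ γ₂) : γ ∈ HolL L :=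
  ⟨fun a b => by rw [h, Function.comp_apply, Function.comp_apply, h₁.1, h₂.1],
    by rw [h, Set.image_comp, h₂.2, h₁.2]⟩

lemma apply_mem_HOrb {δ : V1 n ≃ₗ[ℝ] V1 n} (hδ : δ ∈ HolL L) {v : V1 n} (hv : v ∈ HOrb L k) :
    δ v ∈ HOrb L k := by
  obtain ⟨γ, hγ, rfl⟩ := hv
  exact ⟨γ.trans δ, mem_HolL_of_coe_eq_comp hδ hγ rfl, rfl⟩

lemma dot1_self_of_mem_HOrb {v : V1 n} (hv : v ∈ HOrb L k) : dot1 v v = dot1 k k := by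
  obtain ⟨γ, hγ, rfl⟩ := hv
  exact hγ.1 k k

lemma refl_mem_Jt : LinearEquiv.refl ℝ (Fin n → ℝ) ∈ Jt L y0 :=
  ⟨fun _ _ => rfl, Or.inl ⟨fun _ _ => rfl, by rw [show ⇑(aPlus (.refl ℝ _)) = id from rfl,
    Set.image_id]⟩⟩

lemma trans_mem_Jt {α β : (Fin n → ℝ) ≃ₗ[ℝ] (Fin n → ℝ)} (hα : α ∈ Jt L y0) (hβ : β ∈ Jt L y0) :
    β.trans α ∈ Jt L y0 := by
  refine ⟨fun a b => by rw [LinearEquiv.trans_apply, LinearEquiv.trans_apply, hα.1, hβ.1], ?_⟩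
  rcases hα.2 with hαp | ⟨hy0L, hαm⟩ <;> rcases hβ.2 with hβp | ⟨hy0L, hβm⟩
  · exact .inl (mem_HolL_of_coe_eq_comp hαp hβp rfl)
  · exact .inr ⟨hy0L, mem_HolL_of_coe_eq_comp hαp hβm rfl⟩
  · exact .inr ⟨hy0L, mem_HolL_of_coe_eq_comp hαm hβp rfl⟩
  · exact .inl (mem_HolL_of_coe_eq_comp hαm hβm (funext fun p => by simp [aPlus, aMinus]))

lemma mem_HOrb_or_of_mem_Jt {α : (Fin n → ℝ) ≃ₗ[ℝ] (Fin n → ℝ)} (hα : α ∈ Jt L y0)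
    (h : ((u, z) : V1 n) ∈ HOrb L k) :
    ((α u, z) : V1 n) ∈ HOrb L k ∨ ((α u, -z) : V1 n) ∈ HOrb L k :=
  hα.2.imp (fun hαp => apply_mem_HOrb hαp h) (fun hαm => apply_mem_HOrb hαm.2 h)

lemma self_mem_JOrb (u : Fin n → ℝ) : u ∈ JOrb L y0 u := ⟨_, refl_mem_Jt, rfl⟩

lemma dotn_self_add_sq_of_mem_JOrb (h : ((u, z) : V1 n) ∈ HOrb L k) {w : Fin n → ℝ}
    (hw : w ∈ JOrb L y0 u) : dotn w w + z ^ 2 = dot1 k k := by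
  obtain ⟨α, hα, rfl⟩ := hw
  rcases mem_HOrb_or_of_mem_Jt hα h with h' | h' <;>
    · rw [← dot1_self_of_mem_HOrb h', dot1]; ring

lemma JOrb_inter_eq_empty {u₁ u₂ : Fin n → ℝ} {z₁ z₂ : ℝ} (h₁ : ((u₁, z₁) : V1 n) ∈ HOrb L k)
    (h₂ : ((u₂, z₂) : V1 n) ∈ HOrb L k) (hz : z₁ ≠ z₂) (hz' : z₁ ≠ -z₂) :
    JOrb L y0 u₁ ∩ JOrb L y0 u₂ = ∅ := by
  refine Set.eq_empty_of_forall_notMem fun w ⟨hw₁, hw₂⟩ => ?_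
  have hsq : z₁ ^ 2 = z₂ ^ 2 := by
    linarith [dotn_self_add_sq_of_mem_JOrb h₁ hw₁, dotn_self_add_sq_of_mem_JOrb h₂ hw₂]
  exact (sq_eq_sq_iff_eq_or_eq_neg.mp hsq).elim hz hz'

lemma waveN_mem_span_JOrb (u : Fin n → ℝ) :
    waveN u ∈ Submodule.span ℂ (waveN '' JOrb L y0 u) :=
  Submodule.subset_span ⟨u, self_mem_JOrb u, rfl⟩

lemma span_waveN_JOrb_ne_bot (u : Fin n → ℝ) :
    Submodule.span ℂ (waveN '' JOrb L y0 u) ≠ ⊥ :=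
  fun h => waveN_ne_zero u ((Submodule.mem_bot ℂ).mp (h ▸ waveN_mem_span_JOrb u))

lemma comp_symm_mem_span_waveN_JOrb (u : Fin n → ℝ) {α : (Fin n → ℝ) ≃ₗ[ℝ] (Fin n → ℝ)}
    (hα : α ∈ Jt L y0) {g : (Fin n → ℝ) → ℂ} (hg : g ∈ Submodule.span ℂ (waveN '' JOrb L y0 u)) :
    (fun x => g (α.symm x)) ∈ Submodule.span ℂ (waveN '' JOrb L y0 u) := by
  refine (Submodule.map_span_le (LinearMap.funLeft ℂ ℂ α.symm) _ _).mpr ?_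
    (Submodule.mem_map_of_mem hg)
  rintro _ ⟨_, ⟨β, hβ, rfl⟩, rfl⟩
  change (fun x => waveN (β u) (α.symm x)) ∈ _
  rw [waveN_comp_symm hα.1]
  exact Submodule.subset_span ⟨_, ⟨_, trans_mem_Jt hα hβ, rfl⟩, rfl⟩

lemma wave_mem_modeV {v : V1 n} (hv : v ∈ HOrb L k) : wave v ∈ modeV L k := by
  obtain ⟨δ, hδ, rfl⟩ := hv
  exact Submodule.subset_span ⟨δ, hδ, rfl⟩

lemma span_waveN_JOrb_le_projSubmodule (hy0 : 0 < y0) (h : ((u, z) : V1 n) ∈ HOrb L k)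
    (hi : ∀ m : ℤ, z * y0 = (m : ℝ) → m = 0) :
    Submodule.span ℂ (waveN '' JOrb L y0 u) ≤ projSubmodule y0 (modeV L k) := by
  have hi' : ∀ m : ℤ, -z * y0 = (m : ℝ) → m = 0 := fun m hm =>
    neg_eq_zero.mp (hi (-m) (by push_cast; linarith))
  rw [Submodule.span_le]
  rintro _ ⟨_, ⟨α, hα, rfl⟩, rfl⟩
  rcases mem_HOrb_or_of_mem_Jt hα h with h' | h'
  · exact waveN_mem_projSubmodule (wave_mem_modeV h') (integral_expz_mul_ne_zero hy0 hi)
  · exact waveN_mem_projSubmodule (wave_mem_modeV h') (integral_expz_mul_ne_zero hy0 hi')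

lemma span_waveN_JOrb_subset_Proj_image (hy0 : 0 < y0) (h : ((u, z) : V1 n) ∈ HOrb L k)
    (hi : ∀ m : ℤ, z * y0 = (m : ℝ) → m = 0) :
    (Submodule.span ℂ (waveN '' JOrb L y0 u) : Set ((Fin n → ℝ) → ℂ)) ⊆
      Proj y0 '' (modeV L k : Set (V1 n → ℂ)) :=
  fun _ hg => coe_projSubmodule_subset y0 _ (span_waveN_JOrb_le_projSubmodule hy0 h hi hg)

end Orbits

theorem stmt_19_general (n : ℕ) (b : Fin (n+1) → V1 n)
    (y0 : ℝ) (hy0 : 0 < y0) (k : V1 n)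
    (u1 u2 : Fin n → ℝ) (z1 z2 : ℝ)
    (h1 : ((u1, z1) : V1 n) ∈ HOrb (latticeOf b) k)
    (h2 : ((u2, z2) : V1 n) ∈ HOrb (latticeOf b) k)
    (hz : z1 ≠ z2) (hz' : z1 ≠ -z2)
    (hi1 : ∀ m : ℤ, z1 * y0 = (m : ℝ) → m = 0)
    (hi2 : ∀ m : ℤ, z2 * y0 = (m : ℝ) → m = 0) :
    waveN u1 ∈ Proj y0 '' (modeV (latticeOf b) k : Set (V1 n → ℂ)) ∧
    waveN u2 ∈ Proj y0 '' (modeV (latticeOf b) k : Set (V1 n → ℂ)) ∧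
    JOrb (latticeOf b) y0 u1 ∩ JOrb (latticeOf b) y0 u2 = ∅ ∧
    Submodule.span ℂ (waveN '' JOrb (latticeOf b) y0 u1) ≠ ⊥ ∧
    Submodule.span ℂ (waveN '' JOrb (latticeOf b) y0 u2) ≠ ⊥ ∧
    (Submodule.span ℂ (waveN '' JOrb (latticeOf b) y0 u1) :
        Set ((Fin n → ℝ) → ℂ)) ⊆
      Proj y0 '' (modeV (latticeOf b) k : Set (V1 n → ℂ)) ∧
    (Submodule.span ℂ (waveN '' JOrb (latticeOf b) y0 u2) :
        Set ((Fin n → ℝ) → ℂ)) ⊆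
      Proj y0 '' (modeV (latticeOf b) k : Set (V1 n → ℂ)) ∧
    (∀ α ∈ Jt (latticeOf b) y0,
      ∀ g ∈ Submodule.span ℂ (waveN '' JOrb (latticeOf b) y0 u1),
        (fun x => g (α.symm x)) ∈
          Submodule.span ℂ (waveN '' JOrb (latticeOf b) y0 u1)) ∧
    (∀ α ∈ Jt (latticeOf b) y0,
      ∀ g ∈ Submodule.span ℂ (waveN '' JOrb (latticeOf b) y0 u2),
        (fun x => g (α.symm x)) ∈
          Submodule.span ℂ (waveN '' JOrb (latticeOf b) y0 u2)) ∧
    Submodule.span ℂ (waveN '' JOrb (latticeOf b) y0 u1) ⊓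
        Submodule.span ℂ (waveN '' JOrb (latticeOf b) y0 u2) = ⊥ := by
  have hsub1 := span_waveN_JOrb_subset_Proj_image hy0 h1 hi1
  have hsub2 := span_waveN_JOrb_subset_Proj_image hy0 h2 hi2
  have hdisj := JOrb_inter_eq_empty (y0 := y0) h1 h2 hz hz'
  exact ⟨hsub1 (waveN_mem_span_JOrb u1), hsub2 (waveN_mem_span_JOrb u2), hdisj,
    span_waveN_JOrb_ne_bot u1, span_waveN_JOrb_ne_bot u2, hsub1, hsub2,
    fun _ hα _ => comp_symm_mem_span_waveN_JOrb u1 hα,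
    fun _ hα _ => comp_symm_mem_span_waveN_JOrb u2 hα,
    span_waveN_inf_eq_bot (Set.disjoint_iff_inter_eq_empty.mpr hdisj)⟩

/-- if `(u1,z1),(u2,z2) ∈ H_ℒ·k` with `z1 ≠ ±z2` and `z1·y0, z2·y0 ∉ ℤ\{0}`,
then `ω_{u1}, ω_{u2} ∈ Π_{y0}(V)`, the orbits `J̃·u1`, `J̃·u2` are disjoint, and the spans
of their waves are nonzero `J̃`-invariant subspaces of `Π_{y0}(V)` with trivial
intersection: a mode interaction of at least two modes. -/
theorem stmt_19 (n : ℕ) (hn : 1 ≤ n) (b : Fin (n+1) → V1 n) (hb : LinearIndependent ℝ b)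
    (y0 : ℝ) (hy0 : 0 < y0) (k : V1 n) (hk : k ∈ dualLat (latticeOf b))
    (u1 u2 : Fin n → ℝ) (z1 z2 : ℝ)
    (h1 : ((u1, z1) : V1 n) ∈ HOrb (latticeOf b) k)
    (h2 : ((u2, z2) : V1 n) ∈ HOrb (latticeOf b) k)
    (hz : z1 ≠ z2) (hz' : z1 ≠ -z2)
    (hi1 : ∀ m : ℤ, z1 * y0 = (m : ℝ) → m = 0)
    (hi2 : ∀ m : ℤ, z2 * y0 = (m : ℝ) → m = 0) :
    waveN u1 ∈ Proj y0 '' (modeV (latticeOf b) k : Set (V1 n → ℂ)) ∧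
    waveN u2 ∈ Proj y0 '' (modeV (latticeOf b) k : Set (V1 n → ℂ)) ∧
    JOrb (latticeOf b) y0 u1 ∩ JOrb (latticeOf b) y0 u2 = ∅ ∧
    Submodule.span ℂ (waveN '' JOrb (latticeOf b) y0 u1) ≠ ⊥ ∧
    Submodule.span ℂ (waveN '' JOrb (latticeOf b) y0 u2) ≠ ⊥ ∧
    (Submodule.span ℂ (waveN '' JOrb (latticeOf b) y0 u1) :
        Set ((Fin n → ℝ) → ℂ)) ⊆
      Proj y0 '' (modeV (latticeOf b) k : Set (V1 n → ℂ)) ∧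
    (Submodule.span ℂ (waveN '' JOrb (latticeOf b) y0 u2) :
        Set ((Fin n → ℝ) → ℂ)) ⊆
      Proj y0 '' (modeV (latticeOf b) k : Set (V1 n → ℂ)) ∧
    (∀ α ∈ Jt (latticeOf b) y0,
      ∀ g ∈ Submodule.span ℂ (waveN '' JOrb (latticeOf b) y0 u1),
        (fun x => g (α.symm x)) ∈
          Submodule.span ℂ (waveN '' JOrb (latticeOf b) y0 u1)) ∧
    (∀ α ∈ Jt (latticeOf b) y0,
      ∀ g ∈ Submodule.span ℂ (waveN '' JOrb (latticeOf b) y0 u2),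
        (fun x => g (α.symm x)) ∈
          Submodule.span ℂ (waveN '' JOrb (latticeOf b) y0 u2)) ∧
    Submodule.span ℂ (waveN '' JOrb (latticeOf b) y0 u1) ⊓
        Submodule.span ℂ (waveN '' JOrb (latticeOf b) y0 u2) = ⊥ :=
  stmt_19_general n b y0 hy0 k u1 u2 z1 z2 h1 h2 hz hz' hi1 hi2

end
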